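/- Let μ, ν be quaternionic measures on the Borel sets of ℝ and let F : ℝ → X be a function with values in a quaternionic Banach space X that is integrable with respect to the convolution μ ∗ ν and satisfies ∫∫ ‖F(s+t)‖ d|μ|(s) d|ν|(t) < ∞. Then ∫_ℝ F(r) d(μ∗ν)(r) = ∫_ℝ ∫_ℝ F(s+t) dμ(s) dν(t). -/

import Mathlib

open scoped Quaternion ENNReal
open MeasureTheory MulOpposite

noncomputable section

section Aux
variable {X : Type*} [NormedAddCommGroup X] [NormedSpace ℝ X]
    [Module ℍ[ℝ]ᵐᵒᵖ X] [IsBoundedSMul ℍ[ℝ]ᵐᵒᵖ X]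

/-- `x ↦ op q • x` as a continuous `ℝ`-linear map. -/
def opSMulCLM (q : ℍ[ℝ]) : X →L[ℝ] X :=
  AddMonoidHom.toRealLinearMap
    { toFun := fun x => op q • x
      map_zero' := smul_zero _
      map_add' := fun x y => smul_add _ x y }
    (by
      refine (LipschitzWith.of_dist_le_mul (K := ‖op q‖₊) fun x y => ?_).continuous
      simpa [dist_eq_norm, ← smul_sub] using norm_smul_le (op q) (x - y))

@[simp] lemma opSMulCLM_apply (q : ℍ[ℝ]) (x : X) : opSMulCLM q x = op q • x := rfl

/-- `q ↦ op q • x` as a continuous `ℝ`-linear map. -/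
def pairSMulCLM (x : X) : ℍ[ℝ] →L[ℝ] X :=
  AddMonoidHom.toRealLinearMap
    { toFun := fun q => op q • x
      map_zero' := by simp
      map_add' := fun a b => by
        simp [op_add, add_smul]
      }
    (by
      refine (LipschitzWith.of_dist_le_mul (K := ‖x‖₊) fun a b => ?_).continuous
      have : op a • x - op b • x = (op a - op b) • x := (sub_smul _ _ _).symm
      calc dist (op a • x) (op b • x) = ‖(op a - op b) • x‖ := by rw [dist_eq_norm, this]
        _ ≤ ‖op a - op b‖ * ‖x‖ := norm_smul_le _ _
        _ = ‖x‖ * dist a b := by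
            rw [dist_eq_norm, mul_comm, ← op_sub, norm_op])

@[simp] lemma pairSMulCLM_apply (x : X) (q : ℍ[ℝ]) : pairSMulCLM x q = op q • x := rfl

end Aux

/-- If `p ↦ f p.1` is a.e. strongly measurable w.r.t. a finite measure on `ℝ × ℝ`,
then `f` is a.e. strongly measurable w.r.t. the first marginal. -/
theorem aesm_fst_of_comp {E : Type*} [NormedAddCommGroup E] [NormedSpace ℝ E]
    [CompleteSpace E]
    (ξ : Measure (ℝ × ℝ)) [IsFiniteMeasure ξ] {f : ℝ → E}
    (h : AEStronglyMeasurable (fun p : ℝ × ℝ => f p.1) ξ) :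
    AEStronglyMeasurable f ξ.fst := by
  obtain ⟨H, hH, hHe⟩ := h
  have hnull : ξ {p | ¬ f p.1 = H p} = 0 := hHe
  obtain ⟨N, hNsub, hNm, hN0⟩ := exists_measurable_superset_of_null hnull
  have hdis : ξ.fst.compProd ξ.condKernel = ξ := ξ.disintegrate _
  have h0 : (ξ.fst.compProd ξ.condKernel) N = 0 := by rw [hdis]; exact hN0
  rw [Measure.compProd_apply hNm] at h0
  have hae : ∀ᵐ a ∂ξ.fst, ξ.condKernel a (Prod.mk a ⁻¹' N) = 0 :=
    (lintegral_eq_zero_iff (ProbabilityTheory.Kernel.measurable_kernel_prodMk_left hNm)).1 h0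
  refine ⟨fun a => ∫ b, H (a, b) ∂ξ.condKernel a,
    hH.integral_kernel_prod_right', ?_⟩
  filter_upwards [hae] with a ha
  have hsec : (fun b => H (a, b)) =ᵐ[ξ.condKernel a] fun _ => f a := by
    have hsub : {b | ¬ H (a, b) = f a} ⊆ Prod.mk a ⁻¹' N := fun b hb =>
      hNsub (by simpa using fun hfa => hb hfa.symm)
    exact (measure_mono_null hsub ha)
  rw [integral_congr_ae hsec, integral_const]
  simp

/-- The shear `(s,t) ↦ (s+t, t)` as a measurable equivalence of `ℝ × ℝ`. -/
def shearEquiv : (ℝ × ℝ) ≃ᵐ (ℝ × ℝ) :=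
{ toEquiv :=
  { toFun := fun p => (p.1 + p.2, p.2)
    invFun := fun p => (p.1 - p.2, p.2)
    left_inv := fun p => by simp
    right_inv := fun p => by simp }
  measurable_toFun := (measurable_fst.add measurable_snd).prodMk measurable_snd
  measurable_invFun := (measurable_fst.sub measurable_snd).prodMk measurable_snd }

@[simp] lemma shearEquiv_apply (p : ℝ × ℝ) : shearEquiv p = (p.1 + p.2, p.2) := rfl
@[simp] lemma shearEquiv_symm_apply (p : ℝ × ℝ) : shearEquiv.symm p = (p.1 - p.2, p.2) := rfl

/-- The total variation of a quaternionic (vector) measure. -/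
def qvar {α : Type*} [MeasurableSpace α] (μ : VectorMeasure α ℍ[ℝ]) (A : Set α) : ℝ≥0∞ :=
  ⨆ (π : ℕ → Set α) (_ : ∀ i, MeasurableSet (π i))
    (_ : Pairwise (Function.onFun Disjoint π)) (_ : (⋃ i, π i) = A),
    ∑' i, (‖μ (π i)‖₊ : ℝ≥0∞)

set_option maxHeartbeats 2000000 in
/-- `∫ F d(μ∗ν) = ∫∫ F(s+t) dμ(s) dν(t)` for quaternionic Borel measures on `ℝ`,
where `μ∗ν` is the pushforward of the product measure `μ × ν` under `(s,t) ↦ s+t`,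
and integrals against quaternionic measures `μ = h d|μ|` are `∫ F·h d|μ|`
(right multiplication, i.e. the `ℍᵐᵒᵖ`-action). -/
theorem stmt12 {X : Type*} [NormedAddCommGroup X] [NormedSpace ℝ X]
    [Module ℍ[ℝ]ᵐᵒᵖ X] [IsBoundedSMul ℍ[ℝ]ᵐᵒᵖ X]
    (μ ν : VectorMeasure ℝ ℍ[ℝ])
    (π : VectorMeasure (ℝ × ℝ) ℍ[ℝ])
    (hπ : ∀ A B : Set ℝ, MeasurableSet A → MeasurableSet B →
      π (A ×ˢ B) = μ A * ν B)
    -- polar decompositions of μ, ν and of the convolution μ∗ν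
    (mμ mν mc : Measure ℝ) [IsFiniteMeasure mμ] [IsFiniteMeasure mν] [IsFiniteMeasure mc]
    (hμ hν hc : ℝ → ℍ[ℝ])
    (hmμ : ∀ A : Set ℝ, MeasurableSet A → mμ A = qvar μ A)
    (hmν : ∀ A : Set ℝ, MeasurableSet A → mν A = qvar ν A)
    (hmc : ∀ A : Set ℝ, MeasurableSet A →
      mc A = qvar (π.map fun p : ℝ × ℝ => p.1 + p.2) A)
    (hhμ : StronglyMeasurable hμ) (hhμ1 : ∀ t, ‖hμ t‖ = 1)
    (hhν : StronglyMeasurable hν) (hhν1 : ∀ t, ‖hν t‖ = 1)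
    (hhc : StronglyMeasurable hc) (hhc1 : ∀ t, ‖hc t‖ = 1)
    (hrepμ : ∀ A : Set ℝ, MeasurableSet A → μ A = ∫ t in A, hμ t ∂mμ)
    (hrepν : ∀ A : Set ℝ, MeasurableSet A → ν A = ∫ t in A, hν t ∂mν)
    (hrepc : ∀ A : Set ℝ, MeasurableSet A →
      (π.map fun p : ℝ × ℝ => p.1 + p.2) A = ∫ t in A, hc t ∂mc)
    -- the integrand
    (F : ℝ → X) (hF : Integrable F mc)
    (hF2 : Integrable (fun p : ℝ × ℝ => F (p.1 + p.2)) (mμ.prod mν)) :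
    ∫ r, op (hc r) • F r ∂mc =
      ∫ t, op (hν t) • ∫ s, op (hμ s) • F (s + t) ∂mμ ∂mν := by
  by_cases hX : CompleteSpace X
  swap
  · simp [MeasureTheory.integral_def, hX]
  haveI := hX
  -- notation
  set ad : ℝ × ℝ → ℝ := fun p => p.1 + p.2 with had
  have mad : Measurable ad := measurable_fst.add measurable_snd
  set pr : Measure (ℝ × ℝ) := mμ.prod mν with hpr
  set h2 : ℝ × ℝ → ℍ[ℝ] := fun p => hμ p.1 * hν p.2 with hh2
  have hh2sm : StronglyMeasurable h2 :=
    ((hhμ.comp_measurable measurable_fst).mul (hhν.comp_measurable measurable_snd))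
  have hh2n : ∀ p, ‖h2 p‖ = 1 := fun p => by
    rw [hh2]; simp only [norm_mul, hhμ1, hhν1, one_mul]
  have hone : Integrable (fun _ : ℝ × ℝ => (1:ℝ)) pr := integrable_const 1
  have hh2i : Integrable h2 pr :=
    hone.mono' hh2sm.aestronglyMeasurable
      (Filter.Eventually.of_forall fun p => le_of_eq (hh2n p))
  have hμint : Integrable hμ mμ :=
    (integrable_const (1:ℝ)).mono' hhμ.aestronglyMeasurable
      (Filter.Eventually.of_forall fun t => le_of_eq (hhμ1 t))
  have hνint : Integrable hν mν :=
    (integrable_const (1:ℝ)).mono' hhν.aestronglyMeasurable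
      (Filter.Eventually.of_forall fun t => le_of_eq (hhν1 t))
  have hcint : Integrable hc mc :=
    (integrable_const (1:ℝ)).mono' hhc.aestronglyMeasurable
      (Filter.Eventually.of_forall fun t => le_of_eq (hhc1 t))
  -- rectangles
  have rect : ∀ A B : Set ℝ, MeasurableSet A → MeasurableSet B →
      π (A ×ˢ B) = ∫ p in A ×ˢ B, h2 p ∂pr := by
    intro A B hA hB
    rw [hπ A B hA hB, hrepμ A hA, hrepν B hB]
    rw [← Measure.prod_restrict]
    have hint : Integrable h2 ((mμ.restrict A).prod (mν.restrict B)) := by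
      rw [Measure.prod_restrict]; exact hh2i.integrableOn
    rw [MeasureTheory.integral_prod _ hint]
    have inner : ∀ x : ℝ, (∫ y, h2 (x, y) ∂mν.restrict B) = hμ x * ∫ y in B, hν y ∂mν := by
      intro x
      have := (ContinuousLinearMap.mul ℝ ℍ[ℝ] (hμ x)).integral_comp_comm
        (hνint.restrict (s := B))
      simpa using this
    simp only [inner]
    have := ((ContinuousLinearMap.mul ℝ ℍ[ℝ]).flip (∫ y in B, hν y ∂mν)).integral_comp_comm
      (hμint.restrict (s := A))
    simpa using this.symm
  -- Step A : identify π with the density measure on ℝ²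
  have stepA : ∀ ⦃A : Set (ℝ × ℝ)⦄, MeasurableSet A → π A = ∫ p in A, h2 p ∂pr := by
    refine MeasurableSpace.induction_on_inter generateFrom_prod.symm isPiSystem_prod
      ?_ ?_ ?_ ?_
    · simp
    · rintro t ⟨A, hA, B, hB, rfl⟩
      exact rect A B hA hB
    · intro t htm ht
      have huniv : π Set.univ = ∫ p, h2 p ∂pr := by
        have h := rect Set.univ Set.univ MeasurableSet.univ MeasurableSet.univ
        simpa [Set.univ_prod_univ] using h
      have hcompl : tᶜ = Set.univ \ t := by simp [Set.diff_eq]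
      rw [hcompl, VectorMeasure.of_diff htm MeasurableSet.univ (Set.subset_univ t),
        huniv, ht]
      have hadd := integral_add_compl htm hh2i
      rw [← hcompl]
      rw [← hadd]
      abel
    · intro f hdisj hmeas hind
      have h1 : HasSum (fun i => π (f i)) (π (⋃ i, f i)) := π.m_iUnion hmeas hdisj
      have h2' : HasSum (fun i => ∫ p in f i, h2 p ∂pr) (∫ p in ⋃ i, f i, h2 p ∂pr) :=
        hasSum_integral_iUnion hmeas hdisj hh2i.integrableOn
      have hfe : (fun i => π (f i)) = fun i => ∫ p in f i, h2 p ∂pr := funext hind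
      rw [hfe] at h1
      exact h1.unique h2'
  -- Step B : the two representations of the convolution agree
  have stepB : ∀ ⦃A : Set ℝ⦄, MeasurableSet A →
      (∫ r in A, hc r ∂mc) = ∫ p in ad ⁻¹' A, h2 p ∂pr := by
    intro A hA
    rw [← hrepc A hA, VectorMeasure.map_apply π mad hA, stepA (mad hA)]
  -- the pushforward measure
  set w : Measure ℝ := pr.map ad with hwdef
  haveI : IsFiniteMeasure w := by
    constructor
    rw [hwdef, Measure.map_apply mad MeasurableSet.univ]
    exact measure_lt_top _ _
  have hnn1 : ∀ p, (‖h2 p‖₊ : ℝ≥0∞) = 1 := by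
    intro p
    rw [ENNReal.coe_eq_one]
    exact NNReal.coe_injective (by rw [coe_nnnorm, hh2n p, NNReal.coe_one])
  -- mc ≤ w
  have hmcw : mc ≤ w := by
    rw [Measure.le_iff]
    intro A hA
    rw [hmc A hA]
    refine iSup_le fun P => iSup_le fun hPm => iSup_le fun hPd => iSup_le fun hPu => ?_
    have hterm : ∀ i, (‖(π.map ad) (P i)‖₊ : ℝ≥0∞) ≤ w (P i) := by
      intro i
      rw [VectorMeasure.map_apply π mad (hPm i), stepA (mad (hPm i))]
      calc (‖∫ p in ad ⁻¹' P i, h2 p ∂pr‖₊ : ℝ≥0∞)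
          ≤ ∫⁻ p in ad ⁻¹' P i, ‖h2 p‖₊ ∂pr := enorm_integral_le_lintegral_enorm _
        _ = pr (ad ⁻¹' P i) := by
            rw [lintegral_congr hnn1, setLIntegral_one]
        _ = w (P i) := (Measure.map_apply mad (hPm i)).symm
    calc ∑' i, (‖(π.map ad) (P i)‖₊ : ℝ≥0∞) ≤ ∑' i, w (P i) := ENNReal.tsum_le_tsum hterm
      _ = w (⋃ i, P i) := (measure_iUnion hPd hPm).symm
      _ = w A := by rw [hPu]
  -- F is a.e. strongly measurable w.r.t. w (via disintegration)
  have hFw : AEStronglyMeasurable F w := by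
    set ξ : Measure (ℝ × ℝ) := pr.map (⇑shearEquiv) with hξ
    haveI : IsFiniteMeasure ξ := by
      constructor
      rw [hξ, MeasurableEquiv.map_apply]
      exact measure_lt_top _ _
    have hfst : ξ.fst = w := by
      rw [hξ, Measure.fst, Measure.map_map measurable_fst shearEquiv.measurable]
      rfl
    have hkey : AEStronglyMeasurable (fun p : ℝ × ℝ => F p.1) ξ := by
      obtain ⟨H0, hH0, hH0e⟩ := hF2.aestronglyMeasurable
      have hnull : pr {p : ℝ × ℝ | ¬ F (p.1 + p.2) = H0 p} = 0 := ae_iff.1 hH0e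
      obtain ⟨N, hNsub, hNm, hN0⟩ := exists_measurable_superset_of_null hnull
      refine ⟨H0 ∘ ⇑shearEquiv.symm, hH0.comp_measurable shearEquiv.symm.measurable, ?_⟩
      have hM0 : ξ (⇑shearEquiv.symm ⁻¹' N) = 0 := by
        rw [hξ, MeasurableEquiv.map_apply]
        have hpre : ⇑shearEquiv ⁻¹' (⇑shearEquiv.symm ⁻¹' N) = N := by
          ext q; simp
        rw [hpre]; exact hN0
      refine ae_iff.mpr (measure_mono_null ?_ hM0)
      intro p hp
      simp only [Set.mem_setOf_eq] at hp
      refine Set.mem_preimage.mpr (hNsub ?_)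
      simp only [Set.mem_setOf_eq, shearEquiv_symm_apply]
      intro hcon
      exact hp (by simpa [sub_add_cancel] using hcon)
    have := aesm_fst_of_comp ξ hkey
    rwa [hfst] at this
  -- the auxiliary dominating measure
  set m' : Measure ℝ := mc + w with hm'def
  have hcm' : mc ≤ m' := Measure.le_add_right le_rfl
  have hwm' : w ≤ m' := Measure.le_add_left le_rfl
  have hFm' : AEStronglyMeasurable F m' := by
    obtain ⟨G, hG, hFG⟩ := hFw
    refine ⟨G, hG, ?_⟩
    rw [hm'def, Filter.EventuallyEq, ae_add_measure_iff]
    exact ⟨(Measure.absolutelyContinuous_of_le hmcw).ae_le hFG, hFG⟩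
  have hFwInt : Integrable F w := by
    refine (integrable_map_measure ?_ mad.aemeasurable).2 ?_
    · exact hFw
    · exact hF2
  have hFm'Int : Integrable F m' := by
    rw [hm'def]; exact hF.add_measure hFwInt
  -- integrability helpers
  have hopc : StronglyMeasurable (fun r : ℝ => op (hc r)) :=
    continuous_op.comp_stronglyMeasurable hhc
  have hoph2 : StronglyMeasurable (fun p : ℝ × ℝ => op (h2 p)) :=
    continuous_op.comp_stronglyMeasurable hh2sm
  have intc : ∀ ⦃f : ℝ → X⦄, Integrable f m' → Integrable (fun r => op (hc r) • f r) mc := by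
    intro f hf
    have hfmc : Integrable f mc := hf.mono_measure hcm'
    refine hfmc.norm.mono' (hopc.aestronglyMeasurable.smul hfmc.aestronglyMeasurable) ?_
    refine Filter.Eventually.of_forall fun r => ?_
    calc ‖op (hc r) • f r‖ ≤ ‖op (hc r)‖ * ‖f r‖ := norm_smul_le _ _
      _ = ‖f r‖ := by rw [norm_op, hhc1, one_mul]
  have intp : ∀ ⦃f : ℝ → X⦄, Integrable f m' →
      Integrable (fun p => op (h2 p) • f (ad p)) pr := by
    intro f hf
    have hfw : Integrable f w := hf.mono_measure hwm'
    have hfad : Integrable (fun p => f (ad p)) pr :=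
      (integrable_map_measure hfw.aestronglyMeasurable mad.aemeasurable).1 hfw
    refine hfad.norm.mono' (hoph2.aestronglyMeasurable.smul hfad.aestronglyMeasurable) ?_
    refine Filter.Eventually.of_forall fun p => ?_
    calc ‖op (h2 p) • f (ad p)‖ ≤ ‖op (h2 p)‖ * ‖f (ad p)‖ := norm_smul_le _ _
      _ = ‖f (ad p)‖ := by rw [norm_op, hh2n, one_mul]
  -- the main identity, by induction on integrable functions
  have main : ∀ ⦃f : ℝ → X⦄, Integrable f m' →
      (∫ r, op (hc r) • f r ∂mc) = ∫ p, op (h2 p) • f (ad p) ∂pr := by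
    refine Integrable.induction (μ := m')
      (P := fun f => (∫ r, op (hc r) • f r ∂mc) = ∫ p, op (h2 p) • f (ad p) ∂pr)
      ?_ ?_ ?_ ?_
    · -- indicators
      intro c s hs _
      have hL : (fun r => op (hc r) • Set.indicator s (fun _ => c) r)
          = s.indicator (fun r => op (hc r) • c) := by
        funext r
        by_cases hr : r ∈ s <;>
          simp [Set.indicator_of_mem, Set.indicator_of_notMem, hr]
      have hR : (fun p => op (h2 p) • Set.indicator s (fun _ => c) (ad p))
          = (ad ⁻¹' s).indicator (fun p => op (h2 p) • c) := by
        funext p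
        by_cases hp : ad p ∈ s <;>
          simp [Set.indicator_of_mem, Set.indicator_of_notMem, hp, Set.mem_preimage]
      rw [hL, hR, integral_indicator hs, integral_indicator (mad hs)]
      have e1 : (∫ r in s, op (hc r) • c ∂mc)
          = pairSMulCLM c (∫ r in s, hc r ∂mc) := by
        have := (pairSMulCLM c).integral_comp_comm (hcint.restrict (s := s))
        simpa using this
      have e2 : (∫ p in ad ⁻¹' s, op (h2 p) • c ∂pr)
          = pairSMulCLM c (∫ p in ad ⁻¹' s, h2 p ∂pr) := by
        have := (pairSMulCLM c).integral_comp_comm (hh2i.restrict (s := ad ⁻¹' s))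
        simpa using this
      rw [e1, e2, stepB hs]
    · -- additivity
      intro f g _ hfi hgi hf hg
      have l1 := intc hfi
      have l2 := intc hgi
      have r1 := intp hfi
      have r2 := intp hgi
      simp only [Pi.add_apply, smul_add]
      rw [integral_add l1 l2, integral_add r1 r2, hf, hg]
    · -- closedness in L¹(m')
      have cont1 : Continuous fun f : ℝ →₁[m'] X =>
          ∫ r, op (hc r) • (f : ℝ → X) r ∂mc := by
        refine (LipschitzWith.of_dist_le_mul (K := 1) fun f g => ?_).continuous
        have hfi := L1.integrable_coeFn f
        have hgi := L1.integrable_coeFn g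
        have hsub : Integrable ((f : ℝ → X) - (g : ℝ → X)) m' := hfi.sub hgi
        rw [dist_eq_norm, ← integral_sub (intc hfi) (intc hgi)]
        have hpt : ∀ r, op (hc r) • (f : ℝ → X) r - op (hc r) • (g : ℝ → X) r
            = op (hc r) • ((f : ℝ → X) r - (g : ℝ → X) r) := fun r => (smul_sub _ _ _).symm
        calc ‖∫ r, (op (hc r) • (f : ℝ → X) r - op (hc r) • (g : ℝ → X) r) ∂mc‖
            = ‖∫ r, op (hc r) • ((f : ℝ → X) r - (g : ℝ → X) r) ∂mc‖ := by
              simp only [hpt]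
          _ ≤ ∫ r, ‖op (hc r) • ((f : ℝ → X) r - (g : ℝ → X) r)‖ ∂mc :=
              norm_integral_le_integral_norm _
          _ ≤ ∫ r, ‖(f : ℝ → X) r - (g : ℝ → X) r‖ ∂mc := by
              refine integral_mono (intc hsub).norm
                ((hsub.mono_measure hcm').norm) fun r => ?_
              calc ‖op (hc r) • ((f : ℝ → X) r - (g : ℝ → X) r)‖
                  ≤ ‖op (hc r)‖ * ‖(f : ℝ → X) r - (g : ℝ → X) r‖ := norm_smul_le _ _
                _ = ‖(f : ℝ → X) r - (g : ℝ → X) r‖ := by rw [norm_op, hhc1, one_mul]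
          _ ≤ ∫ r, ‖(f : ℝ → X) r - (g : ℝ → X) r‖ ∂m' :=
              integral_mono_measure hcm'
                (Filter.Eventually.of_forall fun r => norm_nonneg _) hsub.norm
          _ = ‖f - g‖ := by
              rw [L1.norm_eq_integral_norm]
              refine integral_congr_ae ?_
              filter_upwards [Lp.coeFn_sub f g] with r hr
              rw [hr, Pi.sub_apply]
          _ = 1 * dist f g := by rw [one_mul, dist_eq_norm]
      have cont2 : Continuous fun f : ℝ →₁[m'] X =>
          ∫ p, op (h2 p) • (f : ℝ → X) (ad p) ∂pr := by
        refine (LipschitzWith.of_dist_le_mul (K := 1) fun f g => ?_).continuous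
        have hfi := L1.integrable_coeFn f
        have hgi := L1.integrable_coeFn g
        have hsub : Integrable ((f : ℝ → X) - (g : ℝ → X)) m' := hfi.sub hgi
        have hsubw : Integrable ((f : ℝ → X) - (g : ℝ → X)) w := hsub.mono_measure hwm'
        have hsubad : Integrable (fun p => ((f : ℝ → X) - (g : ℝ → X)) (ad p)) pr :=
          (integrable_map_measure hsubw.aestronglyMeasurable mad.aemeasurable).1 hsubw
        rw [dist_eq_norm, ← integral_sub (intp hfi) (intp hgi)]
        have hpt : ∀ p, op (h2 p) • (f : ℝ → X) (ad p) - op (h2 p) • (g : ℝ → X) (ad p)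
            = op (h2 p) • (((f : ℝ → X) - (g : ℝ → X)) (ad p)) := fun p =>
          (smul_sub _ _ _).symm
        calc ‖∫ p, (op (h2 p) • (f : ℝ → X) (ad p) - op (h2 p) • (g : ℝ → X) (ad p)) ∂pr‖
            = ‖∫ p, op (h2 p) • (((f : ℝ → X) - (g : ℝ → X)) (ad p)) ∂pr‖ := by
              simp only [hpt]
          _ ≤ ∫ p, ‖op (h2 p) • (((f : ℝ → X) - (g : ℝ → X)) (ad p))‖ ∂pr :=
              norm_integral_le_integral_norm _
          _ ≤ ∫ p, ‖((f : ℝ → X) - (g : ℝ → X)) (ad p)‖ ∂pr := by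
              refine integral_mono ?_ hsubad.norm fun p => ?_
              · refine hsubad.norm.mono'
                  ((hoph2.aestronglyMeasurable.smul hsubad.aestronglyMeasurable).norm) ?_
                refine Filter.Eventually.of_forall fun p => ?_
                simp only [norm_norm]
                calc ‖op (h2 p) • (((f : ℝ → X) - (g : ℝ → X)) (ad p))‖
                    ≤ ‖op (h2 p)‖ * ‖((f : ℝ → X) - (g : ℝ → X)) (ad p)‖ := norm_smul_le _ _
                  _ = ‖((f : ℝ → X) - (g : ℝ → X)) (ad p)‖ := by rw [norm_op, hh2n, one_mul]
              · calc ‖op (h2 p) • (((f : ℝ → X) - (g : ℝ → X)) (ad p))‖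
                    ≤ ‖op (h2 p)‖ * ‖((f : ℝ → X) - (g : ℝ → X)) (ad p)‖ := norm_smul_le _ _
                  _ = ‖((f : ℝ → X) - (g : ℝ → X)) (ad p)‖ := by rw [norm_op, hh2n, one_mul]
          _ = ∫ r, ‖((f : ℝ → X) - (g : ℝ → X)) r‖ ∂w :=
              (integral_map mad.aemeasurable hsubw.norm.aestronglyMeasurable).symm
          _ ≤ ∫ r, ‖((f : ℝ → X) - (g : ℝ → X)) r‖ ∂m' :=
              integral_mono_measure hwm'
                (Filter.Eventually.of_forall fun r => norm_nonneg _) hsub.norm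
          _ = ‖f - g‖ := by
              rw [L1.norm_eq_integral_norm]
              refine integral_congr_ae ?_
              filter_upwards [Lp.coeFn_sub f g] with r hr
              rw [hr]
          _ = 1 * dist f g := by rw [one_mul, dist_eq_norm]
      exact isClosed_eq cont1 cont2
    · -- stability under a.e. modification
      intro f g hfg hfi hP
      have h1 : f =ᵐ[mc] g := (Measure.absolutelyContinuous_of_le hcm').ae_le hfg
      have h2w : f =ᵐ[w] g := (Measure.absolutelyContinuous_of_le hwm').ae_le hfg
      have h3 : ∀ᵐ p ∂pr, f (ad p) = g (ad p) := ae_of_ae_map mad.aemeasurable h2w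
      calc (∫ r, op (hc r) • g r ∂mc)
          = ∫ r, op (hc r) • f r ∂mc :=
            (integral_congr_ae (h1.mono fun r hr => by rw [hr])).symm
        _ = ∫ p, op (h2 p) • f (ad p) ∂pr := hP
        _ = ∫ p, op (h2 p) • g (ad p) ∂pr :=
            integral_congr_ae (h3.mono fun p hp => by simp only [hp])
  have hmain := main hFm'Int
  rw [hmain]
  -- Fubini
  have hψ : Integrable (fun p : ℝ × ℝ => op (h2 p) • F (ad p)) pr := intp hFm'Int
  have smul_int : ∀ (q : ℍ[ℝ]) (φ : ℝ → X),
      (∫ s, op q • φ s ∂mμ) = op q • ∫ s, φ s ∂mμ := by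
    intro q φ
    by_cases hq : q = 0
    · simp [hq]
    by_cases hφ : Integrable φ mμ
    · have := (opSMulCLM (X := X) q).integral_comp_comm hφ
      simpa using this
    · rw [integral_undef hφ, integral_undef, smul_zero]
      intro hcon
      apply hφ
      have h2con := hcon.smul (op q⁻¹ : ℍ[ℝ]ᵐᵒᵖ)
      refine h2con.congr (Filter.Eventually.of_forall fun s => ?_)
      simp only [Pi.smul_apply]
      rw [← mul_smul, ← op_mul, mul_inv_cancel₀ hq, op_one, one_smul]
  have hgoal : ∀ t : ℝ, (∫ s, op (h2 (s, t)) • F (ad (s, t)) ∂mμ)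
      = op (hν t) • ∫ s, op (hμ s) • F (s + t) ∂mμ := by
    intro t
    rw [← smul_int (hν t) fun s => op (hμ s) • F (s + t)]
    congr 1
    funext s
    rw [← mul_smul, ← op_mul]
  have hψ' : Integrable (Function.uncurry fun s t => op (h2 (s, t)) • F (ad (s, t))) pr := hψ
  calc (∫ p, op (h2 p) • F (ad p) ∂pr)
      = ∫ s, ∫ t, op (h2 (s, t)) • F (ad (s, t)) ∂mν ∂mμ :=
        (MeasureTheory.integral_integral hψ').symm
    _ = ∫ t, ∫ s, op (h2 (s, t)) • F (ad (s, t)) ∂mμ ∂mν :=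
        MeasureTheory.integral_integral_swap hψ'
    _ = ∫ t, op (hν t) • ∫ s, op (hμ s) • F (s + t) ∂mμ ∂mν := by
        simp only [hgoal]
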